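/- arXiv:2407.11679 — 7 statements merged into one kernel-verified Lean document; each statement's English description precedes it below -/
import Mathlib

section
/- Let E be a finite field of characteristic p ≥ 7, χ a multiplicative character of E of order 3, and ψ a nontrivial additive character of E. Set S := ∑_{x ∈ Eˣ} χ(x)·ψ(x) (the Gauss sum) and K := ∑_{x ∈ Eˣ} ψ(x + x⁻¹) (the negative of the Kloosterman sum). Then S·K − S² ≠ |E| in ℂ. (This is the nonvanishing at T = q^{−1} of each factor 1 − γ(o)·Kl(o)·T^{|o|} + γ(o)²·q^{|o|}·T^{2|o|} of the L-function of the abelian surface S_a, which is the key step showing that the analytic rank is 0.) -/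
open Polynomial in
private lemma stmt4_transfer (p : ℕ) [Fact p.Prime] (hp3 : ¬ p ∣ 3)
    {ζ : ℂ} (hζ : IsPrimitiveRoot ζ (3 * p))
    (F : Type) [Field F] [CharP F p] {ω : F} (hω : IsPrimitiveRoot ω 3)
    (P : Polynomial ℤ) (hP : Polynomial.aeval ζ P = 0) : Polynomial.aeval ω P = 0 := by
  have hp2 : 2 ≤ p := (Fact.out : p.Prime).two_le
  have npos : 0 < 3 * p := by omega
  have hdvd : Polynomial.cyclotomic (3 * p) ℤ ∣ P := by
    rw [Polynomial.cyclotomic_eq_minpoly hζ npos]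
    exact minpoly.isIntegrallyClosed_dvd (hζ.isIntegral npos) hP
  obtain ⟨t, rfl⟩ := hdvd
  haveI : NeZero ((3 : ℕ) : F) := ⟨fun h0 => hp3 ((CharP.cast_eq_zero_iff F p 3).mp h0)⟩
  have hzero : Polynomial.aeval ω (Polynomial.cyclotomic (3 * p) ℤ) = 0 := by
    rw [Polynomial.aeval_def, ← Polynomial.eval_map, algebraMap_int_eq, Polynomial.map_cyclotomic_int,
      Polynomial.cyclotomic_mul_prime_eq_pow_of_not_dvd F hp3, Polynomial.eval_pow,
      show Polynomial.eval ω (Polynomial.cyclotomic 3 F) = 0 from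
        Polynomial.isRoot_cyclotomic_iff.mpr hω]
    exact zero_pow (by omega)
  rw [map_mul, hzero, zero_mul]

private lemma stmt4_aux (p : ℕ) (hp : p.Prime) (hp7 : 7 ≤ p)
    (E : Type*) [Field E] [Fintype E] [CharP E p] [Fintype Eˣ]
    (χ : MulChar E ℂ) (hχ : orderOf χ = 3)
    (ψ : AddChar E ℂ) (hψ : ∃ x, ψ x ≠ 1) :
    (∑ x : Eˣ, χ (x : E) * ψ (x : E)) * (∑ x : Eˣ, ψ ((x : E) + ((x : E)⁻¹)))
      - (∑ x : Eˣ, χ (x : E) * ψ (x : E)) ^ 2 ≠ (Fintype.card E : ℂ) := by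
  classical
  intro h
  haveI : Fact p.Prime := ⟨hp⟩
  haveI : NeZero p := ⟨by omega⟩
  haveI : NeZero (3 : ℕ) := ⟨by omega⟩
  have hp3 : ¬ p ∣ 3 := fun hd => by have := Nat.le_of_dvd (by norm_num) hd; omega
  have npos : 0 < 3 * p := by omega
  -- basic character facts
  have hχ1 : χ ≠ 1 := fun e => by rw [e, orderOf_one] at hχ; omega
  have hχ3 : χ ^ 3 = 1 := hχ ▸ pow_orderOf_eq_one χ
  have hcube : ∀ u : Eˣ, χ (u : E) ^ 3 = 1 := fun u => by
    rw [← MulChar.pow_apply_coe, hχ3, MulChar.one_apply_coe]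
  have hpsi : ∀ e : E, ψ e ^ p = 1 := fun e => by
    rw [← AddChar.map_nsmul_eq_pow, nsmul_eq_mul, CharP.cast_eq_zero, zero_mul,
      AddChar.map_zero_eq_one]
  -- the primitive roots of unity
  obtain ⟨ζ, hζ⟩ : ∃ z : ℂ, IsPrimitiveRoot z (3 * p) :=
    ⟨_, Complex.isPrimitiveRoot_exp _ npos.ne'⟩
  have hζ3 : IsPrimitiveRoot (ζ ^ 3) p := hζ.pow npos (by ring)
  have hζp : IsPrimitiveRoot (ζ ^ p) 3 := hζ.pow npos (mul_comm 3 p)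
  choose m hmlt hm using fun e : E => hζ3.eq_pow_of_pow_eq_one (hpsi e)
  choose j hjlt hj using fun u : Eˣ => hζp.eq_pow_of_pow_eq_one (hcube u)
  -- sums over units vs sums over E
  have unitsum : ∀ f : E → ℂ, f 0 = 0 → ∑ u : Eˣ, f u = ∑ x : E, f x := by
    intro f hf
    rw [Finset.sum_eq_sum_sdiff_singleton_add (Finset.mem_univ (0 : E)) f, hf, add_zero]
    calc ∑ u : Eˣ, f ↑u = ∑ s : {x : E // x ≠ 0}, f ↑s :=
          Fintype.sum_equiv unitsEquivNeZero _ _ (fun u => rfl)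
      _ = ∑ x ∈ Finset.univ \ {0}, f x := (Finset.sum_subtype _ (by simp) f).symm
  have hSg : gaussSum χ ψ = ∑ x : Eˣ, χ (x : E) * ψ (x : E) :=
    (unitsum (fun a => χ a * ψ a) (by show χ 0 * ψ 0 = 0; rw [MulChar.map_zero, zero_mul])).symm
  have hS'g : gaussSum χ⁻¹ ψ⁻¹ = ∑ u : Eˣ, (χ (u : E))⁻¹ * ψ (-(u : E)) := by
    have h0 := unitsum (fun a => χ⁻¹ a * ψ⁻¹ a) (by show χ⁻¹ 0 * ψ⁻¹ 0 = 0; rw [MulChar.map_zero, zero_mul])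
    rw [show gaussSum χ⁻¹ ψ⁻¹ = ∑ a : E, χ⁻¹ a * ψ⁻¹ a from rfl, ← h0]
    exact Finset.sum_congr rfl fun u _ => by
      show χ⁻¹ ↑u * ψ⁻¹ ↑u = _
      rw [MulChar.inv_apply_eq_inv', AddChar.inv_apply]
  have hψ1 : ψ ≠ 1 := by
    obtain ⟨x, hx⟩ := hψ
    intro e; exact hx (by rw [e]; rfl)
  have hprod : gaussSum χ ψ * gaussSum χ⁻¹ ψ⁻¹ = (Fintype.card E : ℂ) :=
    gaussSum_mul_gaussSum_eq_card hχ1 (AddChar.IsPrimitive.of_ne_one hψ1)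
  rw [hSg, hS'g] at hprod
  have hcard0 : ((Fintype.card E : ℕ) : ℂ) ≠ 0 :=
    Nat.cast_ne_zero.mpr Fintype.card_ne_zero
  have hS0 : (∑ x : Eˣ, χ (x : E) * ψ (x : E)) ≠ 0 := fun h0 =>
    hcard0 (by rw [← hprod, h0, zero_mul])
  have hKey : (∑ x : Eˣ, ψ ((x : E) + ((x : E)⁻¹)))
      = (∑ x : Eˣ, χ (x : E) * ψ (x : E)) + ∑ u : Eˣ, (χ (u : E))⁻¹ * ψ (-(u : E)) := by
    apply mul_left_cancel₀ hS0
    linear_combination h - hprod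
  -- rewrite everything as powers of ζ
  have hxK : ∀ x : Eˣ, ψ ((x : E) + (x : E)⁻¹) = ζ ^ (3 * m ((x : E) + (x : E)⁻¹)) := fun x => by
    rw [pow_mul]; exact (hm _).symm
  have hxS : ∀ x : Eˣ, χ (x : E) * ψ (x : E) = ζ ^ (p * j x + 3 * m (x : E)) := fun x => by
    simp only [pow_add, pow_mul, hj, hm]
  have hinv : ∀ x : Eˣ, (χ (x : E))⁻¹ = χ (x : E) ^ 2 := fun x =>
    inv_eq_of_mul_eq_one_right (by rw [← pow_succ']; exact hcube x)
  have hxS' : ∀ x : Eˣ, (χ (x : E))⁻¹ * ψ (-(x : E))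
      = ζ ^ (p * j x * 2 + 3 * m (-(x : E))) := fun x => by
    rw [hinv]; simp only [pow_add, pow_mul, hj, hm]
  -- the integer polynomial identity
  set P : Polynomial ℤ := (∑ x : Eˣ, Polynomial.X ^ (3 * m ((x : E) + (x : E)⁻¹)))
      - (∑ x : Eˣ, Polynomial.X ^ (p * j x + 3 * m (x : E)))
      - (∑ x : Eˣ, Polynomial.X ^ (p * j x * 2 + 3 * m (-(x : E)))) with hPdef
  have hPζ : Polynomial.aeval ζ P = 0 := by
    simp only [hPdef, map_sub, map_sum, map_pow, Polynomial.aeval_X]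
    have e1 : ∑ x : Eˣ, ζ ^ (3 * m ((x : E) + (x : E)⁻¹))
        = ∑ x : Eˣ, ψ ((x : E) + ((x : E)⁻¹)) :=
      Finset.sum_congr rfl fun x _ => (hxK x).symm
    have e2 : ∑ x : Eˣ, ζ ^ (p * j x + 3 * m (x : E))
        = ∑ x : Eˣ, χ (x : E) * ψ (x : E) :=
      Finset.sum_congr rfl fun x _ => (hxS x).symm
    have e3 : ∑ x : Eˣ, ζ ^ (p * j x * 2 + 3 * m (-(x : E)))
        = ∑ u : Eˣ, (χ (u : E))⁻¹ * ψ (-(u : E)) :=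
      Finset.sum_congr rfl fun x _ => (hxS' x).symm
    rw [e1, e2, e3, hKey]; ring
  -- move to characteristic p
  obtain ⟨ω, hω⟩ : ∃ ω : AlgebraicClosure (ZMod p), IsPrimitiveRoot ω 3 := by
    haveI : NeZero ((3 : ℕ) : AlgebraicClosure (ZMod p)) :=
      ⟨fun h0 => hp3 ((CharP.cast_eq_zero_iff _ p 3).mp h0)⟩
    exact HasEnoughRootsOfUnity.exists_primitiveRoot _ 3
  have hω3 : ω ^ (3 : ℕ) = 1 := hω.pow_eq_one
  have hPω := stmt4_transfer p hp3 hζ (AlgebraicClosure (ZMod p)) hω P hPζ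
  rw [hPdef] at hPω
  simp only [map_sub, map_sum, map_pow, Polynomial.aeval_X] at hPω
  -- transfer of single power identities
  have hpowtrans : ∀ A B : ℕ, ζ ^ A = ζ ^ B → ω ^ A = ω ^ B := by
    have step : ∀ A B : ℕ, A ≤ B → ζ ^ A = ζ ^ B → ω ^ A = ω ^ B := by
      intro A B hAB hzeq
      obtain ⟨k, rfl⟩ := Nat.exists_eq_add_of_le hAB
      rw [pow_add] at hzeq
      have hz0 : ζ ^ A ≠ 0 := pow_ne_zero _ (hζ.ne_zero npos.ne')
      have hk : ζ ^ k = 1 := mul_left_cancel₀ hz0 (by rw [mul_one, ← hzeq])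
      obtain ⟨t, rfl⟩ : (3 : ℕ) ∣ k :=
        dvd_trans (dvd_mul_right 3 p) (hζ.dvd_of_pow_eq_one k hk)
      rw [pow_add, pow_mul, hω3, one_pow, mul_one]
    intro A B hzeq
    rcases le_total A B with hle | hle
    · exact step A B hle hzeq
    · exact (step B A hle hzeq.symm).symm
  -- multiplicativity of x ↦ ω ^ (p * j x)
  have hmulg : ∀ a b : Eˣ, ω ^ (p * j (a * b)) = ω ^ (p * j a) * ω ^ (p * j b) := by
    intro a b
    have hzeq : ζ ^ (p * j (a * b)) = ζ ^ (p * j a + p * j b) := by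
      calc ζ ^ (p * j (a * b)) = χ (((a * b) : Eˣ) : E) := by rw [pow_mul, hj]
        _ = χ (a : E) * χ (b : E) := by rw [Units.val_mul, map_mul]
        _ = ζ ^ (p * j a + p * j b) := by rw [pow_add, pow_mul, pow_mul, hj, hj]
    rw [hpowtrans _ _ hzeq, pow_add]
  -- nontriviality
  obtain ⟨x₁, hx₁⟩ : ∃ u : Eˣ, χ (u : E) ≠ 1 := MulChar.ne_one_iff.mp hχ1
  have hg1 : ω ^ (p * j x₁) ≠ 1 := by
    intro h1
    have h3 : (3 : ℕ) ∣ p * j x₁ := hω.dvd_of_pow_eq_one _ h1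
    have hj0 : j x₁ = 0 := by
      rcases (Nat.prime_three.dvd_mul).mp h3 with h' | h'
      · exact absurd ((Nat.prime_dvd_prime_iff_eq Nat.prime_three hp).mp h') (by omega)
      · exact Nat.eq_zero_of_dvd_of_lt h' (hjlt x₁)
    exact hx₁ (by rw [← hj x₁, hj0, pow_zero])
  have hgcube : (ω ^ (p * j x₁)) ^ 3 = 1 := by
    rw [← pow_mul, mul_comm, pow_mul, hω3, one_pow]
  have hg2 : (ω ^ (p * j x₁)) ^ 2 ≠ 1 := by
    intro h2
    apply hg1
    have h32 : (ω ^ (p * j x₁)) ^ 3 = (ω ^ (p * j x₁)) ^ 2 * ω ^ (p * j x₁) := by ring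
    rw [hgcube, h2, one_mul] at h32
    exact h32.symm
  -- sums of nontrivial multiplicative functions vanish
  have sumzero : ∀ f : Eˣ → AlgebraicClosure (ZMod p),
      (∀ a b : Eˣ, f (a * b) = f a * f b) → f x₁ ≠ 1 → ∑ x : Eˣ, f x = 0 := by
    intro f hf hne
    have key : f x₁ * ∑ x : Eˣ, f x = ∑ x : Eˣ, f x := by
      rw [Finset.mul_sum]
      calc ∑ x : Eˣ, f x₁ * f x = ∑ x : Eˣ, f (x₁ * x) :=
            Finset.sum_congr rfl fun x _ => (hf x₁ x).symm
        _ = ∑ x : Eˣ, f x :=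
            Fintype.sum_bijective (fun x => x₁ * x) (Group.mulLeft_bijective x₁) _ _
              (fun x => rfl)
    rcases mul_eq_zero.mp
        (show (f x₁ - 1) * ∑ x : Eˣ, f x = 0 by rw [sub_mul, one_mul, key, sub_self]) with h' | h'
    · exact absurd (sub_eq_zero.mp h') hne
    · exact h'
  -- compute the three sums
  have hsum1 : ∑ x : Eˣ, ω ^ (3 * m ((x : E) + (x : E)⁻¹))
      = ((Fintype.card Eˣ : ℕ) : AlgebraicClosure (ZMod p)) := by
    have : ∀ x : Eˣ, ω ^ (3 * m ((x : E) + (x : E)⁻¹)) = 1 := fun x => by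
      rw [pow_mul, hω3, one_pow]
    rw [Finset.sum_congr rfl fun x _ => this x]
    simp
  have hsum2 : ∑ x : Eˣ, ω ^ (p * j x + 3 * m (x : E)) = 0 := by
    have e : ∀ x : Eˣ, ω ^ (p * j x + 3 * m (x : E)) = ω ^ (p * j x) := fun x => by
      rw [pow_add, pow_mul ω 3, hω3, one_pow, mul_one]
    rw [Finset.sum_congr rfl fun x _ => e x]
    exact sumzero _ hmulg hg1
  have hsum3 : ∑ x : Eˣ, ω ^ (p * j x * 2 + 3 * m (-(x : E))) = 0 := by
    have e : ∀ x : Eˣ, ω ^ (p * j x * 2 + 3 * m (-(x : E))) = (ω ^ (p * j x)) ^ 2 := fun x => by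
      rw [pow_add, pow_mul ω 3, hω3, one_pow, mul_one, pow_mul]
    rw [Finset.sum_congr rfl fun x _ => e x]
    exact sumzero _ (fun a b => by rw [hmulg, mul_pow]) hg2
  rw [hsum1, hsum2, hsum3, sub_zero, sub_zero] at hPω
  -- final contradiction
  have h2le : 2 ≤ Fintype.card E := Fintype.one_lt_card
  have hcardE : Fintype.card Eˣ = Fintype.card E - 1 := by
    rw [← Nat.card_eq_fintype_card, ← Nat.card_eq_fintype_card, Nat.card_units]
  obtain ⟨k, -, hk⟩ := FiniteField.card E p
  have hq0 : ((Fintype.card E : ℕ) : AlgebraicClosure (ZMod p)) = 0 := by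
    rw [hk]
    push_cast
    rw [CharP.cast_eq_zero (AlgebraicClosure (ZMod p)) p]
    exact zero_pow (by exact_mod_cast k.pos.ne')
  rw [hcardE, Nat.cast_sub (by omega), hq0, Nat.cast_one, zero_sub, neg_eq_zero] at hPω
  exact one_ne_zero hPω

/-- Nonvanishing at `T = q⁻¹` of each local factor of the `L`-function of the abelian
surface `S_a`: for a finite field `E` of characteristic `p ≥ 7`, a multiplicative
character `χ` of order 3 and a nontrivial additive character `ψ`, setting
`S = ∑_{x ∈ Eˣ} χ(x)ψ(x)` and `K = ∑_{x ∈ Eˣ} ψ(x + x⁻¹)`, one has `S·K - S² ≠ |E|`. -/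
theorem stmt_4 (p : ℕ) (hp : p.Prime) (hp7 : 7 ≤ p)
    (E : Type*) [Field E] [Fintype E] [CharP E p]
    (χ : MulChar E ℂ) (hχ : orderOf χ = 3)
    (ψ : AddChar E ℂ) (hψ : ∃ x, ψ x ≠ 1) :
    haveI : Fintype Eˣ := Fintype.ofFinite Eˣ;
    (∑ x : Eˣ, χ (x : E) * ψ (x : E)) * (∑ x : Eˣ, ψ ((x : E) + ((x : E)⁻¹)))
      - (∑ x : Eˣ, χ (x : E) * ψ (x : E)) ^ 2 ≠ (Fintype.card E : ℂ) := by
  letI : Fintype Eˣ := Fintype.ofFinite Eˣ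
  exact stmt4_aux p hp hp7 E χ hχ ψ hψ
end

section
/- Let E be a finite field whose characteristic p satisfies p ≥ 7 and p ≡ 2 (mod 3). Then for every multiplicative character χ of E of order 3 and every nontrivial additive character ψ of E, one has (gaussSum χ ψ)^6 = |E|³ in ℂ. Consequently, writing gaussSum χ ψ = |E|^{1/2}·e^{iε}, the angle ε is an integer multiple of π/3; this yields the case q ≡ 2 (mod 3) of the description of the Gauss angles ε_o, namely ε_o ∈ {0, π/3, 2π/3, π, 4π/3, 5π/3}. -/
/-- For a finite field `E` of characteristic `p ≥ 7` with `p ≡ 2 (mod 3)`, the Gauss sum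
of a multiplicative character of order 3 and a nontrivial additive character satisfies
`(gaussSum χ ψ)^6 = |E|³`; hence its angle is a multiple of `π/3`. -/
theorem stmt_5 (p : ℕ) (hp : p.Prime) (hp7 : 7 ≤ p) (hp2 : p % 3 = 2)
    (E : Type*) [Field E] [Fintype E] [CharP E p]
    (χ : MulChar E ℂ) (hχ : orderOf χ = 3)
    (ψ : AddChar E ℂ) (hψ : ∃ x, ψ x ≠ 1) :
    (gaussSum χ ψ) ^ 6 = (Fintype.card E : ℂ) ^ 3 := by
  haveI : Fact p.Prime := ⟨hp⟩
  have hχ3 : χ ^ 3 = 1 := hχ ▸ pow_orderOf_eq_one χ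
  have hχ1 : χ ≠ 1 := by
    intro h
    rw [h, orderOf_one] at hχ
    norm_num at hχ
  have hψ1 : ψ ≠ 1 := by
    obtain ⟨x, hx⟩ := hψ
    intro h
    exact hx (by rw [h]; rfl)
  have hψp : ψ.IsPrimitive := AddChar.IsPrimitive.of_ne_one hψ1
  -- the additive character twisted by Frobenius
  set ψ' : AddChar E ℂ := ψ.compAddMonoidHom (frobenius E p).toAddMonoidHom with hψ'def
  have hFbij : Function.Bijective (frobenius E p) := (frobeniusEquiv E p).bijective
  -- reindexing the Gauss sum by the Frobenius
  have h1 : gaussSum χ ψ = gaussSum (χ ^ p) ψ' := by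
    rw [gaussSum, gaussSum]
    refine (Fintype.sum_bijective _ hFbij _ _ fun x ↦ ?_).symm
    simp only [hψ'def, AddChar.compAddMonoidHom_apply, RingHom.toAddMonoidHom_eq_coe,
      AddMonoidHom.coe_coe, MulChar.pow_apply' χ hp.ne_zero, frobenius_def, map_pow]
  -- `χ ^ p = χ ^ 2`
  have hχp : χ ^ p = χ ^ 2 := by
    conv_lhs => rw [← pow_mod_orderOf, hχ, hp2]
  -- `ψ'` is nontrivial
  have hψ'1 : ψ' ≠ 1 := by
    obtain ⟨x, hx⟩ := hψ
    obtain ⟨y, hy⟩ := hFbij.surjective x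
    intro h
    apply hx
    have := DFunLike.congr_fun h y
    rwa [hψ'def, AddChar.compAddMonoidHom_apply, RingHom.toAddMonoidHom_eq_coe,
      AddMonoidHom.coe_coe, hy, AddChar.one_apply] at this
  -- `ψ' = mulShift ψ b` for some `b ≠ 0`
  obtain ⟨b, hb⟩ : ∃ b : E, ψ.mulShift b = ψ' := by
    have hinj : Function.Injective ψ.mulShift :=
      AddChar.to_mulShift_inj_of_isPrimitive hψp
    have hsurj : Function.Surjective ψ.mulShift :=
      ((Fintype.bijective_iff_injective_and_card ψ.mulShift).mpr
        ⟨hinj, (AddChar.card_eq (α := E)).symm⟩).surjective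
    exact hsurj ψ'
  have hb0 : b ≠ 0 := by
    rintro rfl
    rw [AddChar.mulShift_zero] at hb
    exact hψ'1 hb.symm
  -- key identity : `χ b ^ 2 * gaussSum χ ψ = gaussSum χ⁻¹ ψ`
  have hkey : χ b ^ 2 * gaussSum χ ψ = gaussSum χ⁻¹ ψ := by
    have := gaussSum_mulShift (χ ^ 2) ψ (Units.mk0 b hb0)
    rw [Units.val_mk0, hb] at this
    have hmul : χ * χ ^ 2 = 1 := by rw [← pow_succ']; exact hχ3
    have h2 : χ⁻¹ = χ ^ 2 := inv_eq_of_mul_eq_one_right hmul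
    rw [h2, ← this, h1, hχp, MulChar.pow_apply' χ two_ne_zero]
  -- `χ (-1) = 1`
  have hχm1 : χ (-1) = 1 := by
    have h2 : χ (-1) ^ 2 = 1 := by
      rw [← map_pow]; norm_num
    have h3 : χ (-1) ^ 3 = 1 := by
      rw [← MulChar.pow_apply' χ three_ne_zero, hχ3]
      exact MulChar.one_apply isUnit_one.neg
    rwa [pow_succ, h2, one_mul] at h3
  have hinv : gaussSum χ⁻¹ ψ = gaussSum χ⁻¹ ψ⁻¹ := by
    rw [← mul_gaussSum_inv_eq_gaussSum χ⁻¹ ψ, MulChar.inv_apply', inv_neg_one, hχm1, one_mul]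
  have hcard : gaussSum χ ψ * gaussSum χ⁻¹ ψ⁻¹ = Fintype.card E :=
    gaussSum_mul_gaussSum_eq_card hχ1 hψp
  -- conclude
  have hsq : χ b ^ 2 * gaussSum χ ψ ^ 2 = (Fintype.card E : ℂ) := by
    calc χ b ^ 2 * gaussSum χ ψ ^ 2 = gaussSum χ ψ * (χ b ^ 2 * gaussSum χ ψ) := by ring
      _ = (Fintype.card E : ℂ) := by rw [hkey, hinv, hcard]
  have hb6 : (χ b) ^ 6 = 1 := by
    have : (χ b) ^ 3 = 1 := by
      rw [← MulChar.pow_apply' χ three_ne_zero, hχ3]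
      exact MulChar.one_apply (Ne.isUnit hb0)
    calc (χ b) ^ 6 = ((χ b) ^ 3) ^ 2 := by ring
      _ = 1 := by rw [this]; norm_num
  calc gaussSum χ ψ ^ 6 = (χ b) ^ 6 * gaussSum χ ψ ^ 6 := by rw [hb6, one_mul]
    _ = (χ b ^ 2 * gaussSum χ ψ ^ 2) ^ 3 := by ring
    _ = (Fintype.card E : ℂ) ^ 3 := by rw [hsq]
end

section
/- Let F be a finite field with q elements whose characteristic p satisfies p ≥ 7 and p ≡ 1 (mod 3). Then for every multiplicative character χ of F of order 3, every nontrivial additive character ψ of F, and every integer n ≥ 1, one has (gaussSum χ ψ)^{2n} ≠ q^n in ℂ. Equivalently, the normalized Gauss sum gaussSum χ ψ / √q is not a root of unity, i.e. the Gauss angle φ with gaussSum χ ψ = √q·e^{iφ} is not a rational multiple of π. -/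
/-!
If `g(χ)^(2n) = q^n`, then `g(χ)^3 = q J(χ, χ)` gives `J(χ, χ)^(2n) = q^n`. Writing `x = γ^k` for
a generator `γ` of `Fˣ`, the Jacobi sum is `P(χ γ)` for a polynomial `P ∈ ℤ[X]`, and the relation
`P^(2n) - q^n` then vanishes at every primitive cube root of unity in every domain, as it is
divisible by the cyclotomic polynomial `Φ₃`. Taking the root `γ^(2a)` in `F` itself, where
`q - 1 = 3a`, turns `P(γ^(2a))` into the Jacobi sum of the character `x ↦ x^(2a)` of `F`, which
must vanish since `q = 0` in `F`. A direct computation gives `±C(2a, a)` for that sum, and as the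
base-`p` digits of `a` are all `(p - 1)/3`, Lucas' theorem shows that `p ∤ C(2a, a)`.
-/

open Finset Polynomial

namespace Nat.Prime

theorem not_dvd_centralBinom_add_mul {p c A : ℕ} (hp : p.Prime) (hc : 2 * c < p)
    (hA : ¬ p ∣ centralBinom A) : ¬ p ∣ centralBinom (c + p * A) := by
  have : Fact p.Prime := ⟨hp⟩
  have hlucas : centralBinom (c + p * A) ≡ centralBinom c * centralBinom A [MOD p] := by
    have := Choose.choose_modEq_choose_mod_mul_choose_div_nat (n := 2 * c + p * (2 * A))
      (k := c + p * A) (p := p)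
    simp only [Nat.add_mul_mod_self_left, Nat.add_mul_div_left _ _ hp.pos,
      Nat.mod_eq_of_lt hc, Nat.mod_eq_of_lt (by omega : c < p), Nat.div_eq_of_lt hc,
      Nat.div_eq_of_lt (by omega : c < p), zero_add] at this
    simpa only [centralBinom_eq_two_mul_choose, mul_add, mul_left_comm 2 p] using this
  have hc' : ¬ p ∣ centralBinom c := fun h ↦ by
    have := factorization_centralBinom_eq_zero_of_two_mul_lt hc
    simp_all [Nat.factorization_eq_zero_iff, (centralBinom_pos c).ne']
  rw [hlucas.dvd_iff dvd_rfl, hp.dvd_mul]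
  tauto

theorem not_dvd_centralBinom_pow_sub_one_div {p d : ℕ} (hp : p.Prime) (hd : 2 ≤ d)
    (hdp : d ∣ p - 1) (f : ℕ) : ¬ p ∣ centralBinom ((p ^ f - 1) / d) := by
  induction f with
  | zero => simpa using hp.one_lt.ne'
  | succ f ih =>
    obtain ⟨A, hA⟩ : d ∣ p ^ f - 1 := hdp.trans (by simpa using Nat.sub_dvd_pow_sub_pow p 1 f)
    obtain ⟨c, hc⟩ := hdp
    have hdigits : (p ^ (f + 1) - 1) / d = c + p * A := by
      have h1 : 1 ≤ p ^ f := Nat.one_le_pow _ _ hp.pos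
      have h2 : p ^ (f + 1) - 1 = d * (c + p * A) := by
        have h3 : 1 ≤ p ^ f * p := Nat.mul_pos h1 hp.pos
        rw [pow_succ]
        zify [h1, h3, hp.one_le] at *
        linear_combination (p : ℤ) * hA + hc
      rw [h2, Nat.mul_div_cancel_left _ (by omega)]
    rw [hdigits]
    rw [hA, Nat.mul_div_cancel_left _ (by omega)] at ih
    refine hp.not_dvd_centralBinom_add_mul ?_ ih
    have := Nat.mul_le_mul_right c hd
    have := hp.pos
    omega

end Nat.Prime

theorem IsPrimitiveRoot.aeval_eq_zero_of_aeval_eq_zero {K R : Type*} [Field K] [CharZero K]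
    [CommRing R] [IsDomain R] {n : ℕ} (hn : 0 < n) {μ : K} {ν : R}
    (hμ : IsPrimitiveRoot μ n) (hν : IsPrimitiveRoot ν n) {P : ℤ[X]} (hP : aeval μ P = 0) :
    aeval ν P = 0 := by
  obtain ⟨Q, rfl⟩ : cyclotomic n ℤ ∣ P := by
    rw [cyclotomic_eq_minpoly hμ hn]
    exact minpoly.isIntegrallyClosed_dvd (hμ.isIntegral hn) hP
  have := hν.isRoot_cyclotomic hn
  simp_all [aeval_def, eval₂_eq_eval_map]

namespace FiniteField

variable {K : Type*} [Field K] [Fintype K]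

local notation "q" => Fintype.card K

theorem sum_pow_of_lt_two_mul_card_sub_one {k : ℕ} (hk : k < 2 * (q - 1)) :
    ∑ x : K, x ^ k = if k = q - 1 then -1 else 0 := by
  classical
  rcases lt_or_ge k (q - 1) with hlt | hge
  · rw [sum_pow_lt_card_sub_one K k hlt, if_neg hlt.ne]
  obtain ⟨j, rfl⟩ := Nat.exists_eq_add_of_le hge
  have hpow (x : K) : x ^ (q - 1 + j) = x ^ j - if x = 0 then 0 ^ j else 0 := by
    by_cases hx : x = 0
    · simp [hx]
      omega
    · rw [pow_add, pow_card_sub_one_eq_one x hx, if_neg hx]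
      ring
  rw [sum_congr rfl fun x _ ↦ hpow x, sum_sub_distrib, sum_pow_lt_card_sub_one K j (by omega),
    sum_ite_eq' univ (0 : K), if_pos (mem_univ _)]
  rcases eq_or_ne j 0 with rfl | hj
  · simp
  · simp [hj]

theorem sum_pow_mul_one_sub_pow {m : ℕ} (hm : m < q - 1) (hm' : q - 1 ≤ 2 * m) :
    ∑ x : K, x ^ m * (1 - x) ^ m = -((-1) ^ (q - 1 - m) * (m.choose (q - 1 - m) : K)) := by
  have hexpand (x : K) : x ^ m * (1 - x) ^ m =
      ∑ j ∈ range (m + 1), (-1) ^ j * (m.choose j : K) * x ^ (m + j) := by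
    rw [sub_eq_neg_add, add_pow, mul_sum]
    refine sum_congr rfl fun j _ ↦ ?_
    rw [neg_pow, pow_add]
    ring
  rw [sum_congr rfl fun x _ ↦ hexpand x, sum_comm]
  simp_rw [← mul_sum]
  rw [sum_eq_single_of_mem (q - 1 - m) (mem_range.mpr (by omega))]
  · rw [sum_pow_of_lt_two_mul_card_sub_one (by omega), if_pos (by omega)]
    ring
  · intro j hj hne
    rw [sum_pow_of_lt_two_mul_card_sub_one (by simp at hj; omega), if_neg (by omega), mul_zero]

end FiniteField

namespace MulChar

variable {F : Type*} [Field F] [Finite F] {g : Fˣ}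

theorem isPrimitiveRoot_apply_of_forall_mem_zpowers {R : Type*} [CommRing R]
    (hg : ∀ x, x ∈ Subgroup.zpowers g) (χ : MulChar F R) :
    IsPrimitiveRoot (χ g) (orderOf χ) := by
  refine ⟨by rw [← pow_apply_coe, pow_orderOf_eq_one, one_apply_coe], fun l hl ↦ ?_⟩
  refine orderOf_dvd_of_pow_eq_one (MulChar.ext fun u ↦ ?_)
  obtain ⟨k, rfl⟩ := mem_powers_iff_mem_zpowers.mpr (hg u)
  rw [pow_apply_coe, one_apply_coe, Units.val_pow_eq_pow_val, map_pow, ← pow_mul, mul_comm,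
    pow_mul, hl, one_pow]

theorem exists_aeval_eq {R S : Type*} [CommRing R] [CommRing S]
    (hg : ∀ x, x ∈ Subgroup.zpowers g) (χ : MulChar F R) (τ : MulChar F S) :
    ∃ e : F → ℤ[X], ∀ x, aeval (χ g) (e x) = χ x ∧ aeval (τ g) (e x) = τ x := by
  classical
  choose k hk using fun u ↦ mem_powers_iff_mem_zpowers.mpr (hg u)
  refine ⟨fun x ↦ if hx : x = 0 then 0 else X ^ k (Units.mk0 x hx), fun x ↦ ?_⟩
  by_cases hx : x = 0
  · simp [hx]
  · simp only [hx, dite_false, map_pow, aeval_X]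
    constructor <;> simp only [← map_pow, ← Units.val_pow_eq_pow_val, hk, Units.val_mk0]

variable [Fintype F]

theorem aeval_jacobiSum_eq_zero_of_aeval_eq_zero {K R : Type*} [Field K] [CharZero K]
    [CommRing R] [IsDomain R] (hg : ∀ x, x ∈ Subgroup.zpowers g) {n : ℕ} (hn : 0 < n)
    {χ : MulChar F K} {τ : MulChar F R} (hχ : IsPrimitiveRoot (χ g) n)
    (hτ : IsPrimitiveRoot (τ g) n) {Q : ℤ[X]} (hQ : aeval (jacobiSum χ χ) Q = 0) :
    aeval (jacobiSum τ τ) Q = 0 := by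
  obtain ⟨e, he⟩ := exists_aeval_eq hg χ τ
  set P := ∑ x, e x * e (1 - x)
  have hPχ : aeval (χ g) P = jacobiSum χ χ := by simp [P, jacobiSum, he]
  have hPτ : aeval (τ g) P = jacobiSum τ τ := by simp [P, jacobiSum, he]
  rw [← hPτ, ← aeval_comp]
  exact hχ.aeval_eq_zero_of_aeval_eq_zero hn hτ (by rwa [aeval_comp, hPχ])

end MulChar

section powMulChar

variable (F : Type*) [Field F]

def powMulChar (m : ℕ) (hm : m ≠ 0) : MulChar F F where
  toFun x := x ^ m
  map_one' := one_pow m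
  map_mul' x y := mul_pow x y m
  map_nonunit' x hx := by
    rw [isUnit_iff_ne_zero, not_not] at hx
    rw [hx, zero_pow hm]

variable {F}

theorem powMulChar_apply {m : ℕ} (hm : m ≠ 0) (x : F) : powMulChar F m hm x = x ^ m := rfl

variable [Fintype F]

theorem isPrimitiveRoot_powMulChar_apply {g : Fˣ} (hg : ∀ x, x ∈ Subgroup.zpowers g)
    {d k j : ℕ} (hk : Fintype.card F - 1 = k * d) (hj : j.Coprime d) (hm : j * k ≠ 0) :
    IsPrimitiveRoot (powMulChar F (j * k) hm g) d := by
  have hg' : IsPrimitiveRoot (g : F) (Fintype.card F - 1) := by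
    rw [IsPrimitiveRoot.coe_units_iff, ← Nat.card_eq_fintype_card, ← Nat.card_units,
      ← orderOf_eq_card_of_forall_mem_zpowers hg]
    exact IsPrimitiveRoot.orderOf g
  rw [powMulChar_apply, mul_comm, pow_mul]
  exact (hg'.pow (Nat.sub_pos_of_lt Fintype.one_lt_card) hk).pow_of_coprime j hj

theorem jacobiSum_powMulChar {m : ℕ} (hm : m ≠ 0) (hmq : m < Fintype.card F - 1)
    (hmq' : Fintype.card F - 1 ≤ 2 * m) :
    jacobiSum (powMulChar F m hm) (powMulChar F m hm) =
      -((-1) ^ (Fintype.card F - 1 - m) * (m.choose (Fintype.card F - 1 - m) : F)) :=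
  FiniteField.sum_pow_mul_one_sub_pow hmq hmq'

end powMulChar

section GaussSum

variable {F R : Type*} [Field F] [Fintype F] [CommRing R] [IsDomain R]
  {χ : MulChar F R} {ψ : AddChar F R}

theorem gaussSum_pow_three (hχ : orderOf χ = 3) (hψ : ψ.IsPrimitive) :
    gaussSum χ ψ ^ 3 = Fintype.card F * jacobiSum χ χ := by
  have hχ3 : χ ^ 3 = 1 := hχ ▸ pow_orderOf_eq_one χ
  have := gaussSum_pow_eq_prod_jacobiSum (hχ ▸ (by norm_num : 2 ≤ 3)) hψ
  rw [hχ, MulChar.val_neg_one_eq_one_of_odd_order (by decide) hχ3] at this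
  simpa using this

theorem jacobiSum_pow_eq_of_gaussSum_pow_eq [CharZero R] (hχ : orderOf χ = 3)
    (hψ : ψ.IsPrimitive) {n : ℕ} (h : gaussSum χ ψ ^ (2 * n) = (Fintype.card F : R) ^ n) :
    jacobiSum χ χ ^ (2 * n) = (Fintype.card F : R) ^ n := by
  have hq : (Fintype.card F : R) ≠ 0 := Nat.cast_ne_zero.mpr Fintype.card_ne_zero
  refine mul_left_cancel₀ (pow_ne_zero (2 * n) hq) ?_
  rw [← mul_pow, ← gaussSum_pow_three hχ hψ, ← pow_mul, mul_comm 3, pow_mul, h]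
  ring

end GaussSum

theorem stmt_6_general (p : ℕ) (hp1 : p % 3 = 1)
    (F : Type*) [Field F] [Fintype F] [CharP F p]
    (χ : MulChar F ℂ) (hχ : orderOf χ = 3)
    (ψ : AddChar F ℂ) (hψ : ∃ x, ψ x ≠ 1)
    (n : ℕ) (hn : 1 ≤ n) :
    (gaussSum χ ψ) ^ (2 * n) ≠ (Fintype.card F : ℂ) ^ n := by
  intro h
  have hp : p.Prime := CharP.char_is_prime F p
  have : Fact p.Prime := ⟨hp⟩
  obtain ⟨f, -, hq⟩ := FiniteField.card F p
  obtain ⟨a, ha⟩ : 3 ∣ Fintype.card F - 1 := by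
    have : Fintype.card F % 3 = 1 := by simp [hq, Nat.pow_mod, hp1]
    omega
  have ha0 : 2 * a ≠ 0 := by have := Fintype.one_lt_card (α := F); omega
  obtain ⟨g, hg⟩ := IsCyclic.exists_generator (α := Fˣ)
  -- `x ↦ x ^ a` has order 3 as well, but its Jacobi sum vanishes in `F`
  set τ := powMulChar F (2 * a) ha0
  have hJ := jacobiSum_pow_eq_of_gaussSum_pow_eq hχ
    (AddChar.IsPrimitive.of_ne_one fun h1 ↦ by simp [h1] at hψ) h
  have hτJ : jacobiSum τ τ = 0 := by
    have := MulChar.aeval_jacobiSum_eq_zero_of_aeval_eq_zero hg three_pos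
      (hχ ▸ MulChar.isPrimitiveRoot_apply_of_forall_mem_zpowers hg χ)
      (isPrimitiveRoot_powMulChar_apply hg (by rw [ha, mul_comm]) (by norm_num) ha0)
      (Q := X ^ (2 * n) - C (Fintype.card F : ℤ) ^ n) (by simp [hJ])
    refine (pow_eq_zero_iff (by omega : 2 * n ≠ 0)).mp ?_
    simpa [FiniteField.cast_card_eq_zero, zero_pow (by omega : n ≠ 0)] using this
  have hdvd : p ∣ Nat.centralBinom a := by
    rw [jacobiSum_powMulChar ha0 (by omega) (by omega),
      show Fintype.card F - 1 - 2 * a = a by omega] at hτJ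
    rw [← CharP.cast_eq_zero_iff F p]
    simpa [Nat.centralBinom_eq_two_mul_choose] using hτJ
  refine hp.not_dvd_centralBinom_pow_sub_one_div (d := 3) (by norm_num) (by omega) f ?_
  rwa [← hq, ha, Nat.mul_div_cancel_left _ (by norm_num)]

/-- For a finite field `F` with `q` elements of characteristic `p ≥ 7` with
`p ≡ 1 (mod 3)`, the normalized Gauss sum of a character of order 3 is not a root of
unity: `(gaussSum χ ψ)^(2n) ≠ q^n` for every `n ≥ 1`. -/
theorem stmt_6 (p : ℕ) (hp : p.Prime) (hp7 : 7 ≤ p) (hp1 : p % 3 = 1)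
    (F : Type*) [Field F] [Fintype F] [CharP F p]
    (χ : MulChar F ℂ) (hχ : orderOf χ = 3)
    (ψ : AddChar F ℂ) (hψ : ∃ x, ψ x ≠ 1)
    (n : ℕ) (hn : 1 ≤ n) :
    (gaussSum χ ψ) ^ (2 * n) ≠ (Fintype.card F : ℂ) ^ n :=
  stmt_6_general p hp1 F χ hχ ψ hψ n hn
end

section
/- For every real number x and every j ∈ {0, 1, 2, 3, 4, 5}, one has (sin(6x)/4)² ≤ |sin(x + jπ/6)|. In particular, for every x ∈ [0, 2π), (sin(6x)/4)² ≤ min_{j=0,…,5} |sin(x + jπ/6)|. -/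
open Real

lemma abs_sin_nat_mul_le (n : ℕ) (y : ℝ) : |Real.sin (n * y)| ≤ n * |Real.sin y| := by
  induction n with
  | zero => simp
  | succ n ih =>
    have : Real.sin ((n + 1 : ℕ) * y) = Real.sin (n * y) * Real.cos y + Real.cos (n * y) * Real.sin y := by
      push_cast; rw [add_mul, one_mul, Real.sin_add]
    rw [this]
    calc |Real.sin (n * y) * Real.cos y + Real.cos (n * y) * Real.sin y|
        ≤ |Real.sin (n * y) * Real.cos y| + |Real.cos (n * y) * Real.sin y| := abs_add_le _ _
      _ ≤ |Real.sin (n * y)| * 1 + 1 * |Real.sin y| := by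
          rw [abs_mul, abs_mul]
          gcongr <;> first | exact Real.abs_cos_le_one _ | exact Real.abs_sin_le_one _
      _ ≤ n * |Real.sin y| + 1 * |Real.sin y| := by
          have := abs_nonneg (Real.sin y)
          nlinarith [ih]
      _ = (n + 1 : ℕ) * |Real.sin y| := by push_cast; ring

/-- For every real `x` and every `j ∈ {0, …, 5}`, `(sin(6x)/4)² ≤ |sin(x + jπ/6)|`. -/
theorem stmt_7 (x : ℝ) (j : ℕ) (hj : j ≤ 5) :
    (Real.sin (6 * x) / 4) ^ 2 ≤ |Real.sin (x + (j : ℝ) * π / 6)| := by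
  set y := x + (j : ℝ) * π / 6 with hy
  have h6 : (6 : ℝ) * y = 6 * x + (j : ℕ) * π := by rw [hy]; push_cast; ring
  have habs : |Real.sin (6 * x)| = |Real.sin (6 * y)| := by
    rw [h6, Real.sin_add_nat_mul_pi, abs_mul, abs_pow, abs_neg, abs_one, one_pow, one_mul]
  have h1 : |Real.sin (6 * y)| ≤ 6 * |Real.sin y| := by
    have := abs_sin_nat_mul_le 6 y
    push_cast at this; exact this
  have h2 : |Real.sin (6 * x)| ≤ 1 := Real.abs_sin_le_one _
  calc (Real.sin (6 * x) / 4) ^ 2 = |Real.sin (6 * x)| * |Real.sin (6 * x)| / 16 := by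
        rw [← abs_mul, abs_of_nonneg (mul_self_nonneg _)]; ring
    _ ≤ (6 * |Real.sin y|) * 1 / 16 := by
        rw [habs] at h2 ⊢; gcongr
    _ ≤ |Real.sin y| := by nlinarith [abs_nonneg (Real.sin y)]
end

section
/- Let r be a nonzero integer and λ ∈ [0, π]. Then the function x ↦ (2/π)·sin²(x)·log|sin(r·(x + λ))| is integrable on the interval [0, π], and |∫₀^π (2/π)·sin²(x)·log|sin(r·(x + λ))| dx| ≤ log 4. (The integrand is interpreted with the convention log 0 = 0, which matches Lean's Real.log, at the finitely many points where sin(r·(x + λ)) = 0; these form a null set.) -/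
open Real MeasureTheory Set

/-!
Since `0 ≤ (2/π) sin² ≤ 2/π` and `log |sin| ≤ 0`, the integral is bounded in absolute value by
`(2/π) ∫₀^π -log |sin (r (x + λ))| dx`. As `log |sin|` is `π`-periodic and `r` is a nonzero
integer, the substitution `y = r (x + λ)` reduces this integral to the classical
`∫₀^π log (sin y) dy = -π log 2`, and `(2/π) · π log 2 = log 4`.
-/

theorem Function.Periodic.intervalIntegral_comp_int_mul_add {E : Type*} [NormedAddCommGroup E]
    [NormedSpace ℝ E] {f : ℝ → E} {T : ℝ} (hf : Function.Periodic f T)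
    (h_int : ∀ a b, IntervalIntegrable f volume a b) {n : ℤ} (hn : n ≠ 0) (d : ℝ) :
    ∫ x in 0..T, f (n * x + d) = ∫ x in 0..T, f x := by
  have hn' : (n : ℝ) ≠ 0 := Int.cast_ne_zero.mpr hn
  rw [intervalIntegral.integral_comp_mul_add f hn' d, mul_zero, zero_add, add_comm _ d,
    ← zsmul_eq_mul, hf.intervalIntegral_add_zsmul_eq n d h_int, hf.intervalIntegral_add_eq d 0,
    zero_add, ← Int.cast_smul_eq_zsmul ℝ, smul_smul, inv_mul_cancel₀ hn', one_smul]

theorem periodic_log_abs_sin : Function.Periodic (fun x => log |sin x|) π := fun x => by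
  simp only [sin_add_pi, abs_neg]

theorem intervalIntegrable_log_abs_sin (a b : ℝ) :
    IntervalIntegrable (fun x => log |sin x|) volume a b :=
  analyticOnNhd_sin.meromorphicOn.intervalIntegrable_log_norm

theorem integral_log_abs_sin_int_mul_add {n : ℤ} (hn : n ≠ 0) (d : ℝ) :
    ∫ x in 0..π, log |sin (n * x + d)| = -log 2 * π := by
  rw [periodic_log_abs_sin.intervalIntegral_comp_int_mul_add intervalIntegrable_log_abs_sin hn d]
  simp only [log_abs, integral_log_sin_zero_pi]

theorem abs_integral_mul_le_of_nonpos {f g : ℝ → ℝ} {a b C : ℝ} (hab : a ≤ b)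
    (hf : ContinuousOn f (uIcc a b)) (hf0 : ∀ x ∈ Icc a b, 0 ≤ f x)
    (hfC : ∀ x ∈ Icc a b, f x ≤ C) (hg : IntervalIntegrable g volume a b)
    (hg0 : ∀ x ∈ Icc a b, g x ≤ 0) :
    |∫ x in a..b, f x * g x| ≤ C * -∫ x in a..b, g x := by
  have hpointwise : ∀ x ∈ Icc a b, |f x * g x| ≤ C * -g x := fun x hx => by
    rw [abs_mul, abs_of_nonneg (hf0 x hx), abs_of_nonpos (hg0 x hx)]
    exact mul_le_mul_of_nonneg_right (hfC x hx) (neg_nonneg.mpr (hg0 x hx))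
  calc |∫ x in a..b, f x * g x| ≤ ∫ x in a..b, |f x * g x| :=
        intervalIntegral.abs_integral_le_integral_abs hab
    _ ≤ ∫ x in a..b, C * -g x :=
        intervalIntegral.integral_mono_on hab (hg.continuousOn_mul hf).abs
          (hg.neg.const_mul C) hpointwise
    _ = C * -∫ x in a..b, g x := by
        rw [intervalIntegral.integral_const_mul, intervalIntegral.integral_neg]

theorem stmt_9_general (r : ℤ) (hr : r ≠ 0) (lam : ℝ) :
    IntervalIntegrable
        (fun x : ℝ => (2 / π) * Real.sin x ^ 2 * Real.log (abs (Real.sin ((r : ℝ) * (x + lam)))))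
        volume 0 π ∧
      |∫ x in (0:ℝ)..π,
          (2 / π) * Real.sin x ^ 2 * Real.log (abs (Real.sin ((r : ℝ) * (x + lam))))| ≤
        Real.log 4 := by
  set W : ℝ → ℝ := fun x => log |sin (r * (x + lam))|
  have hW_int : IntervalIntegrable W volume 0 π := by
    have : AnalyticOnNhd ℝ (fun x => sin (r * (x + lam))) (uIcc 0 π) := fun x _ => by fun_prop
    exact this.meromorphicOn.intervalIntegrable_log_norm
  have hW_val : ∫ x in 0..π, W x = -log 2 * π := by
    simpa only [W, mul_add] using integral_log_abs_sin_int_mul_add hr (r * lam)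
  have hweight : ContinuousOn (fun x => 2 / π * sin x ^ 2) (uIcc 0 π) := by fun_prop
  refine ⟨hW_int.continuousOn_mul hweight, ?_⟩
  calc _ ≤ 2 / π * -∫ x in 0..π, W x :=
        abs_integral_mul_le_of_nonpos pi_pos.le hweight (fun x _ => by positivity)
          (fun x _ => mul_le_of_le_one_right (by positivity) (sin_sq_le_one x)) hW_int
          (fun x _ => log_nonpos (abs_nonneg _) (abs_sin_le_one _))
    _ = log 4 := by
        rw [hW_val, show (4 : ℝ) = 2 ^ 2 by norm_num, log_pow]
        field_simp
        norm_num

/-- The function `x ↦ (2/π) sin²(x) log|sin(r(x+λ))|` is integrable on `[0, π]` and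
its integral (the Sato–Tate integral of `W^{r,λ}`) has absolute value at most `log 4`. -/
theorem stmt_9 (r : ℤ) (hr : r ≠ 0) (lam : ℝ) (hlam : lam ∈ Set.Icc 0 π) :
    IntervalIntegrable
        (fun x : ℝ => (2 / π) * Real.sin x ^ 2 * Real.log (abs (Real.sin ((r : ℝ) * (x + lam)))))
        volume 0 π ∧
      |∫ x in (0:ℝ)..π,
          (2 / π) * Real.sin x ^ 2 * Real.log (abs (Real.sin ((r : ℝ) * (x + lam))))| ≤
        Real.log 4 :=
  stmt_9_general r hr lam
end

section
/- Let q = p^m be a prime power with p ≥ 7 prime. There exist constants c₁, c₂ > 0, depending only on q, such that for every integer a ≥ 1 and every finite field F with q^a elements, the number |O_q(a)| of orbits of the map (j, x) ↦ (q·j, x^q) acting on (ZMod 3)ˣ × Fˣ satisfies c₁·q^a/a ≤ |O_q(a)| ≤ c₂·q^a/a. -/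
/-!
The map `φ (j, x) = (q j, x ^ q)` is a permutation with `φ^[2a] = id`, so the number of its
orbits is `∑ w, 1 / minimalPeriod φ w`. Every term is at least `1 / (2a)`, which gives the lower
bound. For the upper bound, a point whose second coordinate generates `F` over `𝔽_q` has period
at least `a`; the remaining points have second coordinate in a proper subfield `𝔽_{q^g}` with
`g ≤ a / 2`, so there are at most `a q^(a/2)` of them, which is `O(q^a / a)`.
-/

/-- The orbit of `(j, x)` under the map `(j, x) ↦ (q·j, x^q)` on `(ZMod 3)ˣ × Fˣ`
(where `q·j` is multiplication by `q mod 3`). -/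
def twistedOrbit (q : ℕ) {F : Type*} [Field F] (w : (ZMod 3)ˣ × Fˣ) :
    Set ((ZMod 3)ˣ × Fˣ) :=
  {z : (ZMod 3)ˣ × Fˣ | ∃ n : ℕ,
    (z.1 : ZMod 3) = (q : ZMod 3) ^ n * (w.1 : ZMod 3) ∧ z.2 = w.2 ^ q ^ n}

/-- The set of orbits of `(j, x) ↦ (q·j, x^q)` acting on `(ZMod 3)ˣ × Fˣ`. -/
def twistedOrbits (q : ℕ) (F : Type*) [Field F] : Set (Set ((ZMod 3)ˣ × Fˣ)) :=
  {S | ∃ w : (ZMod 3)ˣ × Fˣ, S = twistedOrbit q w}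

open Function Finset

namespace Function

variable {α : Type*} {f : α → α} {x y : α}

def forwardOrbit (f : α → α) (x : α) : Set α :=
  Set.range fun n => f^[n] x

def forwardOrbits (f : α → α) : Set (Set α) :=
  Set.range (forwardOrbit f)

theorem ncard_forwardOrbit (hx : x ∈ periodicPts f) :
    (forwardOrbit f x).ncard = minimalPeriod f x := by
  have hrange : forwardOrbit f x = (f^[·] x) '' Set.Iio (minimalPeriod f x) := by
    refine subset_antisymm ?_ (Set.image_subset_range _ _)
    rintro _ ⟨n, rfl⟩
    exact ⟨n % minimalPeriod f x, Nat.mod_lt _ (minimalPeriod_pos_of_mem_periodicPts hx),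
      iterate_mod_minimalPeriod_eq⟩
  rw [hrange, iterate_injOn_Iio_minimalPeriod.ncard_image, ← coe_Iio, Set.ncard_coe_finset,
    Nat.card_Iio]

theorem forwardOrbit_eq_of_mem (hx : x ∈ periodicPts f) (hy : y ∈ forwardOrbit f x) :
    forwardOrbit f y = forwardOrbit f x := by
  obtain ⟨k, rfl⟩ := hy
  have hp := minimalPeriod_pos_of_mem_periodicPts hx
  refine subset_antisymm ?_ ?_
  · rintro _ ⟨n, rfl⟩
    exact ⟨n + k, iterate_add_apply f n k x⟩
  · rintro _ ⟨n, rfl⟩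
    refine ⟨n + (minimalPeriod f x - 1) * k, ?_⟩
    have : n + (minimalPeriod f x - 1) * k + k = n + minimalPeriod f x * k := by
      rw [add_assoc, ← Nat.succ_mul, Nat.succ_eq_add_one, Nat.sub_add_cancel hp]
    dsimp only
    rw [← iterate_add_apply, this, iterate_add_apply,
      ((isPeriodicPt_minimalPeriod f x).mul_const k).eq]

variable [Fintype α]

theorem ncard_forwardOrbits_eq_sum (hf : ∀ x, x ∈ periodicPts f) :
    ((forwardOrbits f).ncard : ℝ) = ∑ x, 1 / (minimalPeriod f x : ℝ) := by
  classical
  have hfiber : ∀ y, ({x | forwardOrbit f x = forwardOrbit f y} : Finset α) =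
      (forwardOrbit f y).toFinset := fun y => by
    ext x
    simp only [mem_filter, mem_univ, true_and, Set.mem_toFinset]
    exact ⟨fun h => h ▸ ⟨0, rfl⟩, forwardOrbit_eq_of_mem (hf y)⟩
  have hfiber_sum : ∀ s ∈ univ.image (forwardOrbit f),
      ∑ x ∈ univ with forwardOrbit f x = s, 1 / (minimalPeriod f x : ℝ) = 1 := by
    simp only [mem_image, mem_univ, true_and]
    rintro _ ⟨y, rfl⟩
    have hperiod : ∀ x ∈ (forwardOrbit f y).toFinset, minimalPeriod f x = minimalPeriod f y :=
      fun x hx => by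
        rw [← ncard_forwardOrbit (hf x), ← ncard_forwardOrbit (hf y),
          forwardOrbit_eq_of_mem (hf y) (Set.mem_toFinset.mp hx)]
    have hy : (minimalPeriod f y : ℝ) ≠ 0 := by
      exact_mod_cast (minimalPeriod_pos_of_mem_periodicPts (hf y)).ne'
    rw [hfiber y, sum_congr rfl fun x hx => by rw [hperiod x hx], sum_const,
      ← Set.ncard_eq_toFinset_card', ncard_forwardOrbit (hf y), nsmul_eq_mul,
      mul_one_div_cancel hy]
  rw [← sum_fiberwise_of_maps_to (t := univ.image (forwardOrbit f))
      fun x _ => mem_image_of_mem _ (mem_univ x),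
    sum_congr rfl hfiber_sum, sum_const, nsmul_one, ← Set.ncard_coe_finset, coe_image, coe_univ,
    Set.image_univ, forwardOrbits]

theorem card_div_le_ncard_forwardOrbits {N : ℕ} (hN : 0 < N) (h : ∀ x, IsPeriodicPt f N x) :
    (Fintype.card α : ℝ) / N ≤ (forwardOrbits f).ncard := by
  rw [ncard_forwardOrbits_eq_sum fun x => mk_mem_periodicPts hN (h x), div_eq_mul_one_div,
    ← nsmul_eq_mul, ← card_univ, ← sum_const]
  refine sum_le_sum fun x _ => one_div_le_one_div_of_le ?_ ?_
  · exact_mod_cast minimalPeriod_pos_of_mem_periodicPts (mk_mem_periodicPts hN (h x))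
  · exact_mod_cast (h x).minimalPeriod_le hN

theorem ncard_forwardOrbits_le (hf : ∀ x, x ∈ periodicPts f) {L : ℕ} (hL : 0 < L) :
    ((forwardOrbits f).ncard : ℝ) ≤ Fintype.card α / L + #{x | minimalPeriod f x < L} := by
  rw [ncard_forwardOrbits_eq_sum hf, div_eq_mul_one_div, ← nsmul_eq_mul, ← card_univ,
    ← sum_const, natCast_card_filter, ← sum_add_distrib]
  refine sum_le_sum fun x _ => ?_
  have hx : (1 : ℝ) ≤ minimalPeriod f x := by
    exact_mod_cast minimalPeriod_pos_of_mem_periodicPts (hf x)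
  split_ifs with hlt
  · calc 1 / (minimalPeriod f x : ℝ) ≤ 1 := div_le_one_of_le₀ hx (by positivity)
      _ ≤ 1 / L + 1 := le_add_of_nonneg_left (by positivity)
  · rw [add_zero]
    exact one_div_le_one_div_of_le (by exact_mod_cast hL) (by exact_mod_cast not_lt.mp hlt)

theorem card_minimalPeriod_prodMap_lt_le {β : Type*} [Fintype β] {g : β → β}
    (hfg : ∀ w, w ∈ periodicPts (Prod.map f g)) (L : ℕ) :
    #{w | minimalPeriod (Prod.map f g) w < L} ≤
      Fintype.card α * #{y | minimalPeriod g y < L} := by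
  rw [← card_univ, ← card_product]
  refine card_le_card fun w hw => mem_product.mpr ⟨mem_univ _, ?_⟩
  simp only [mem_filter, mem_univ, true_and] at hw ⊢
  exact (Nat.le_of_dvd (minimalPeriod_pos_of_mem_periodicPts (hfg w))
    minimalPeriod_snd_dvd).trans_lt hw

end Function

theorem isPeriodicPt_pow_iff {M : Type*} [Monoid M] {x : M} {q n : ℕ} :
    IsPeriodicPt (· ^ q) n x ↔ x ^ q ^ n = x := by
  rw [IsPeriodicPt, IsFixedPt, pow_iterate]

theorem Nat.le_div_two_of_dvd_of_lt {g a : ℕ} (hg : g ∣ a) (hlt : g < a) : g ≤ a / 2 := by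
  obtain ⟨c, rfl⟩ := hg
  have : 2 ≤ c := by
    rcases c with _ | _ | c
    all_goals simp_all
  rw [Nat.le_div_iff_mul_le two_pos]
  exact Nat.mul_le_mul_left g this

theorem card_minimalPeriod_pow_lt_le {G : Type*} [Group G] [Fintype G] [DecidableEq G] [IsCyclic G]
    {q a : ℕ} (hq : 2 ≤ q) (h : ∀ x : G, x ^ q ^ a = x) :
    #{x : G | minimalPeriod (· ^ q) x < a} ≤ a / 2 * q ^ (a / 2) := by
  have hsub : ({x : G | minimalPeriod (· ^ q) x < a} : Finset G) ⊆
      (Icc 1 (a / 2)).biUnion fun g => {x : G | x ^ (q ^ g - 1) = 1} := by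
    intro x hx
    rw [mem_filter] at hx
    have hper : IsPeriodicPt (· ^ q) a x := isPeriodicPt_pow_iff.mpr (h x)
    have hpos : 0 < minimalPeriod (· ^ q) x :=
      minimalPeriod_pos_of_mem_periodicPts (mk_mem_periodicPts (by omega) hper)
    simp only [mem_biUnion, mem_Icc, mem_filter, mem_univ, true_and]
    refine ⟨_, ⟨hpos, Nat.le_div_two_of_dvd_of_lt hper.minimalPeriod_dvd hx.2⟩, ?_⟩
    have hfix := isPeriodicPt_pow_iff.mp (isPeriodicPt_minimalPeriod (· ^ q) x)
    rwa [← pow_sub_one_mul (pow_ne_zero _ (by omega)), mul_eq_right] at hfix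
  calc _ ≤ _ := card_le_card hsub
    _ ≤ ∑ g ∈ Icc 1 (a / 2), #{x : G | x ^ (q ^ g - 1) = 1} := card_biUnion_le
    _ ≤ ∑ g ∈ Icc 1 (a / 2), q ^ (a / 2) := sum_le_sum fun g hg => by
      have hg := mem_Icc.mp hg
      have hqg : 1 < q ^ g := Nat.one_lt_pow (by omega) (by omega)
      calc _ ≤ q ^ g - 1 := IsCyclic.card_pow_eq_one_le (by omega)
        _ ≤ q ^ (a / 2) := (Nat.sub_le _ _).trans (Nat.pow_le_pow_right (by omega) hg.2)
    _ = a / 2 * q ^ (a / 2) := by simp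

theorem mul_self_mul_pow_div_two_le_pow {q : ℕ} (hq : 4 ≤ q) (a : ℕ) :
    a * a * q ^ (a / 2) ≤ q ^ a := by
  have two_mul_le_two_pow : ∀ n, 2 * n ≤ 2 ^ n
    | 0 => by simp
    | n + 1 => by have := @Nat.lt_two_pow_self n; rw [pow_succ]; omega
  set k := a - a / 2
  have hak : a ≤ 2 ^ k := (by omega : a ≤ 2 * k).trans (two_mul_le_two_pow k)
  calc a * a * q ^ (a / 2) ≤ 2 ^ k * 2 ^ k * q ^ (a / 2) := by gcongr
    _ = 4 ^ k * q ^ (a / 2) := by rw [← mul_pow]; norm_num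
    _ ≤ q ^ k * q ^ (a / 2) := by gcongr
    _ = q ^ a := by rw [← pow_add]; congr 1; omega

section TwistedFrobenius

variable {q a : ℕ} {F : Type*} [Field F] {u : (ZMod 3)ˣ}

theorem twistedOrbits_eq_forwardOrbits (hu : (u : ZMod 3) = q) :
    twistedOrbits q F = forwardOrbits (Prod.map (u * ·) (· ^ q)) := by
  ext S
  simp only [twistedOrbits, forwardOrbits, Set.mem_ofPred_eq, Set.mem_range, eq_comm (a := S)]
  refine exists_congr fun w => Eq.congr_left (Set.ext fun z => ?_)
  simp [twistedOrbit, forwardOrbit, Prod.map_iterate, mul_left_iterate, pow_iterate,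
    Prod.ext_iff, Units.ext_iff, hu, eq_comm]

variable [Fintype F]

theorem card_zmod_three_units_prod_units [DecidableEq F] :
    (Fintype.card ((ZMod 3)ˣ × Fˣ) : ℝ) = 2 * (Fintype.card F - 1) := by
  rw [Fintype.card_prod, ZMod.card_units, Fintype.card_units, Nat.cast_mul,
    Nat.cast_sub Fintype.card_pos]
  norm_num

theorem isPeriodicPt_pow_units (hF : Fintype.card F = q ^ a) (x : Fˣ) :
    IsPeriodicPt (· ^ q) a x :=
  isPeriodicPt_pow_iff.mpr <| Units.ext <| by
    push_cast
    rw [← hF, FiniteField.pow_card]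

theorem isPeriodicPt_twistedFrobenius (hF : Fintype.card F = q ^ a) (w : (ZMod 3)ˣ × Fˣ) :
    IsPeriodicPt (Prod.map (u * ·) (· ^ q)) (2 * a) w := by
  refine IsPeriodicPt.prodMap ?_ ((isPeriodicPt_pow_units hF w.2).const_mul 2)
  have hu : u ^ 2 = 1 := by revert u; decide
  have : IsPeriodicPt (u * ·) 2 w.1 := by
    rw [IsPeriodicPt, IsFixedPt, mul_left_iterate, hu]
    exact one_mul _
  exact this.mul_const a

theorem div_le_ncard_forwardOrbits_twistedFrobenius (hF : Fintype.card F = q ^ a) (ha : 0 < a) :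
    (q : ℝ) ^ a / (2 * a) ≤
      (forwardOrbits (Prod.map (u * ·) (· ^ q : Fˣ → Fˣ))).ncard := by
  classical
  have hlow :=
    card_div_le_ncard_forwardOrbits (by omega) (isPeriodicPt_twistedFrobenius (u := u) hF)
  have hF2 : (2 : ℝ) ≤ q ^ a := by exact_mod_cast hF ▸ Fintype.one_lt_card (α := F)
  rw [card_zmod_three_units_prod_units, hF] at hlow
  push_cast at hlow
  refine le_trans ?_ hlow
  gcongr
  linarith

theorem card_minimalPeriod_twistedFrobenius_lt_mul_le [DecidableEq F] (hq : 4 ≤ q)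
    (hF : Fintype.card F = q ^ a) (ha : 0 < a) :
    #{w | minimalPeriod (Prod.map (u * ·) (· ^ q : Fˣ → Fˣ)) w < a} * a ≤ q ^ a := calc
  _ ≤ 2 * #{x : Fˣ | minimalPeriod (· ^ q) x < a} * a := by
    have h := card_minimalPeriod_prodMap_lt_le (L := a) fun w =>
      mk_mem_periodicPts (by omega) (isPeriodicPt_twistedFrobenius (u := u) hF w)
    rw [ZMod.card_units 3] at h
    gcongr
  _ ≤ 2 * (a / 2 * q ^ (a / 2)) * a := by
    gcongr
    exact card_minimalPeriod_pow_lt_le (by omega) fun x =>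
      isPeriodicPt_pow_iff.mp (isPeriodicPt_pow_units hF x)
  _ ≤ a * a * q ^ (a / 2) := by rw [← mul_assoc, mul_right_comm]; gcongr; omega
  _ ≤ q ^ a := mul_self_mul_pow_div_two_le_pow hq a

theorem ncard_forwardOrbits_twistedFrobenius_le (hq : 4 ≤ q) (hF : Fintype.card F = q ^ a)
    (ha : 0 < a) :
    ((forwardOrbits (Prod.map (u * ·) (· ^ q : Fˣ → Fˣ))).ncard : ℝ) ≤ 3 * q ^ a / a := by
  classical
  have hup := ncard_forwardOrbits_le
    (fun w => mk_mem_periodicPts (by omega) (isPeriodicPt_twistedFrobenius (u := u) hF w)) ha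
  have hbad := card_minimalPeriod_twistedFrobenius_lt_mul_le (u := u) hq hF ha
  have ha' : (0 : ℝ) < a := by exact_mod_cast ha
  rw [card_zmod_three_units_prod_units, hF] at hup
  push_cast at hup
  calc _ ≤ 2 * ((q : ℝ) ^ a - 1) / a + q ^ a / a :=
        hup.trans (by gcongr; rw [le_div_iff₀ ha']; exact_mod_cast hbad)
    _ ≤ 2 * (q : ℝ) ^ a / a + q ^ a / a := by gcongr; linarith
    _ = 3 * (q : ℝ) ^ a / a := by ring

end TwistedFrobenius

/-- The number `|O_q(a)|` of orbits of `(j, x) ↦ (q·j, x^q)` on `(ZMod 3)ˣ × Fˣ`, for `F`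
a field with `q^a` elements, is bounded above and below by constant multiples of
`q^a / a`, with constants depending only on `q`. -/
theorem stmt_14 (p m q : ℕ) (hp : p.Prime) (hp7 : 7 ≤ p) (hm : 1 ≤ m) (hq : q = p ^ m) :
    ∃ c₁ c₂ : ℝ, 0 < c₁ ∧ 0 < c₂ ∧
      ∀ (a : ℕ), 1 ≤ a →
      ∀ (F : Type) [Field F] [Fintype F], Fintype.card F = q ^ a →
        c₁ * (q : ℝ) ^ a / a ≤ ((twistedOrbits q F).ncard : ℝ) ∧
        ((twistedOrbits q F).ncard : ℝ) ≤ c₂ * (q : ℝ) ^ a / a := by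
  refine ⟨1 / 2, 3, by norm_num, by norm_num, fun a ha F _ _ hF => ?_⟩
  have hq7 : 7 ≤ q := hq ▸ hp7.trans (Nat.le_self_pow (by omega) p)
  have hcop : q.Coprime 3 :=
    hq ▸ ((Nat.coprime_primes hp Nat.prime_three).mpr (by omega)).pow_left m
  rw [twistedOrbits_eq_forwardOrbits (ZMod.coe_unitOfCoprime q hcop)]
  refine ⟨?_, ncard_forwardOrbits_twistedFrobenius_le (by omega) hF ha⟩
  calc 1 / 2 * (q : ℝ) ^ a / a = q ^ a / (2 * a) := by ring
    _ ≤ _ := div_le_ncard_forwardOrbits_twistedFrobenius hF ha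
end

section
/- Let q = p^m be a prime power with p ≥ 7 prime and q ≡ 1 (mod 3), and let d ≥ 1 be an integer. Let E be a finite field with q^d elements. Then there exists α ∈ Eˣ such that the orbit of α under the map x ↦ x^q has exactly d elements (equivalently, α generates E over its q-element subfield) and α is not a cube in E, i.e. there is no β ∈ E with β³ = α. -/
/-- For `q ≡ 1 (mod 3)` a power of a prime `p ≥ 7` and `E` a finite field with `q^d`
elements, there exists `α ∈ Eˣ` whose orbit under `x ↦ x^q` has exactly `d` elements
(i.e. `α` generates `E` over the `q`-element subfield) and which is not a cube in `E`. -/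
theorem stmt_18 (p m q : ℕ) (hp : p.Prime) (hp7 : 7 ≤ p) (hm : 1 ≤ m) (hq : q = p ^ m)
    (hq3 : q % 3 = 1) (d : ℕ) (hd : 1 ≤ d)
    (E : Type*) [Field E] [Fintype E] (hE : Fintype.card E = q ^ d) :
    ∃ α : Eˣ, ({y : Eˣ | ∃ n : ℕ, y = α ^ q ^ n} : Set Eˣ).ncard = d ∧
      ¬∃ β : E, β ^ 3 = (α : E) := by
  classical
  have hq2 : 2 ≤ q := by
    have : p ≤ p ^ m := Nat.le_self_pow (by omega) p
    omega
  set N := q ^ d - 1 with hN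
  have hqd : 2 ≤ q ^ d := le_trans hq2 (Nat.le_self_pow (by omega) q)
  have h3N : 3 ∣ N := by
    have : q ^ d % 3 = 1 % 3 := by
      have := Nat.ModEq.pow d (show q ≡ 1 [MOD 3] from hq3)
      simpa [Nat.ModEq] using this
    omega
  have hcard : Nat.card Eˣ = N := by
    rw [Nat.card_eq_fintype_card (α := Eˣ), Fintype.card_units, hE]
  obtain ⟨g, hg⟩ := IsCyclic.exists_generator (α := Eˣ)
  have horder : orderOf g = N := by
    rw [orderOf_eq_card_of_forall_mem_zpowers hg, hcard]
  have hqdpow : q ^ d ≡ 1 [MOD N] := by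
    rw [Nat.ModEq.comm, Nat.modEq_iff_dvd' (by omega)]
  refine ⟨g, ?_, ?_⟩
  · -- orbit size
    have aux : ∀ r s : ℕ, r ≤ s → s < d → q ^ r ≡ q ^ s [MOD N] → r = s := by
      intro r s hrs hs h
      have hdvd : N ∣ q ^ s - q ^ r :=
        (Nat.modEq_iff_dvd' (Nat.pow_le_pow_right (by omega) hrs)).mp h
      have hlt : q ^ s < q ^ d := Nat.pow_lt_pow_right (by omega) hs
      have hr1 : 1 ≤ q ^ r := Nat.one_le_pow _ _ (by omega)
      have hzero : q ^ s - q ^ r = 0 := Nat.eq_zero_of_dvd_of_lt hdvd (by omega)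
      have hle : q ^ s ≤ q ^ r := by omega
      have := (Nat.pow_le_pow_iff_right (by omega : 1 < q)).mp hle
      omega
    have hset : {y : Eˣ | ∃ n : ℕ, y = g ^ q ^ n} = (fun r => g ^ q ^ r) '' Set.Iio d := by
      ext y
      simp only [Set.mem_setOf_eq, Set.mem_image, Set.mem_Iio]
      constructor
      · rintro ⟨n, rfl⟩
        refine ⟨n % d, Nat.mod_lt _ (by omega), ?_⟩
        rw [pow_eq_pow_iff_modEq, horder]
        conv_rhs => rw [← Nat.div_add_mod n d]
        rw [pow_add, pow_mul]
        have h2 : (1:ℕ) ^ (n / d) * q ^ (n % d) ≡ (q ^ d) ^ (n / d) * q ^ (n % d) [MOD N] :=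
          (hqdpow.symm.pow _).mul_right _
        simpa using h2
      · rintro ⟨r, _, rfl⟩
        exact ⟨r, rfl⟩
    have hinj : Set.InjOn (fun r => g ^ q ^ r) (Set.Iio d) := by
      intro r hr s hs hfs
      simp only [Set.mem_Iio] at hr hs
      rw [pow_eq_pow_iff_modEq, horder] at hfs
      rcases le_total r s with h | h
      · exact aux r s h hs hfs
      · exact (aux s r h hr hfs.symm).symm
    rw [hset, Set.ncard_image_of_injOn hinj, ← Finset.coe_range,
      Set.ncard_coe_finset, Finset.card_range]
  · -- not a cube
    rintro ⟨β, hβ⟩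
    have hβ0 : β ≠ 0 := by
      intro h
      rw [h] at hβ
      exact g.ne_zero (by simpa using hβ.symm)
    have hu : (Units.mk0 β hβ0) ^ 3 = g := by
      ext
      push_cast
      exact hβ
    have h1 : g ^ (N / 3) = 1 := by
      rw [← hu, ← pow_mul, Nat.mul_div_cancel' h3N, ← hcard, pow_card_eq_one']
    have hdvd := orderOf_dvd_of_pow_eq_one h1
    rw [horder] at hdvd
    have hN3 : N / 3 < N := Nat.div_lt_self (by omega) (by omega)
    have : N ≤ N / 3 := Nat.le_of_dvd (by omega) hdvd
    omega
end
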